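/- arXiv:1907.04707 — 3 statements merged into one kernel-verified Lean document; each statement's English description precedes it below -/
import Mathlib

section
/- Let n⁺ > 0 and n⁻ > 0 be real numbers, let μ⁺ > μ⁻ be real numbers, and let p, q be real numbers with 0 < p ≤ 1 and 0 < q ≤ 1. Then (p·n⁺·μ⁺ + q·n⁻·μ⁻)/(p·n⁺ + q·n⁻) > (n⁺·μ⁺ + n⁻·μ⁻)/(n⁺ + n⁻) if and only if p > q. -/
/-- Proposition 2, expectation form: for n⁺, n⁻ > 0, μ⁺ > μ⁻,
0 < p ≤ 1 and 0 < q ≤ 1, E_filter > E_origin iff p > q. -/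
theorem stmt_3 (np nm μp μm p q : ℝ)
    (hnp : 0 < np) (hnm : 0 < nm) (hμ : μp > μm)
    (hp0 : 0 < p) (hp1 : p ≤ 1) (hq0 : 0 < q) (hq1 : q ≤ 1) :
    (p * np * μp + q * nm * μm) / (p * np + q * nm) >
      (np * μp + nm * μm) / (np + nm) ↔ p > q := by
  have hd1 : 0 < p * np + q * nm := by positivity
  have hd2 : 0 < np + nm := by positivity
  rw [gt_iff_lt, div_lt_div_iff₀ hd2 hd1]
  have key : (p * np * μp + q * nm * μm) * (np + nm) -
      (np * μp + nm * μm) * (p * np + q * nm) = (p - q) * (np * nm) * (μp - μm) := by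
    ring
  constructor
  · intro h
    by_contra hle
    push_neg at hle
    nlinarith [mul_nonneg (mul_nonneg (sub_nonneg.mpr hle) (le_of_lt (mul_pos hnp hnm))) (le_of_lt (sub_pos.mpr hμ))]
  · intro h
    nlinarith [mul_pos (mul_pos (sub_pos.mpr h) (mul_pos hnp hnm)) (sub_pos.mpr hμ)]
end

section
/- Let n⁺ ≥ 0 and n⁻ ≥ 0 be real numbers with n⁺ + n⁻ > 0, let n' > 0 be a real number, let 0 ≤ p ≤ 1, and let μ⁺ > μ⁻ be real numbers. Set r = n⁺/(n⁺ + n⁻). Then ((n⁺ + p·n')·μ⁺ + (n⁻ + (1 − p)·n')·μ⁻)/(n⁺ + n⁻ + n') > (n⁺·μ⁺ + n⁻·μ⁻)/(n⁺ + n⁻) if and only if p > r. -/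
/-- Proposition 3, expectation form: for n⁺, n⁻ ≥ 0 with
n⁺ + n⁻ > 0, n' > 0, 0 ≤ p ≤ 1, μ⁺ > μ⁻, and r = n⁺/(n⁺ + n⁻),
E_add > E_origin iff p > r. -/
theorem stmt_5 (np nm n' p μp μm : ℝ)
    (hnp : 0 ≤ np) (hnm : 0 ≤ nm) (hsum : 0 < np + nm) (hn' : 0 < n')
    (hp0 : 0 ≤ p) (hp1 : p ≤ 1) (hμ : μp > μm) :
    ((np + p * n') * μp + (nm + (1 - p) * n') * μm) / (np + nm + n') >
      (np * μp + nm * μm) / (np + nm) ↔ p > np / (np + nm) := by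
  rw [gt_iff_lt, gt_iff_lt, div_lt_div_iff₀ hsum (by linarith), div_lt_iff₀ hsum]
  constructor <;> intro h <;> nlinarith [mul_pos hn' (sub_pos.mpr hμ)]
end

section
/- Let n⁺ > 0, n⁻ > 0, μ⁺ > μ⁻ be real numbers, let 0 < q < p ≤ 1, let n' > 0, and let p' be a real number with p·n⁺/(p·n⁺ + q·n⁻) < p' ≤ 1. Then performing filtering followed by adding strictly improves the expected prediction twice: (n⁺·μ⁺ + n⁻·μ⁻)/(n⁺ + n⁻) < (p·n⁺·μ⁺ + q·n⁻·μ⁻)/(p·n⁺ + q·n⁻) < ((p·n⁺ + p'·n')·μ⁺ + (q·n⁻ + (1 − p')·n')·μ⁻)/(p·n⁺ + q·n⁻ + n'). -/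
/-- Propositions 2 and 3 combined: for n⁺, n⁻ > 0, μ⁺ > μ⁻,
0 < q < p ≤ 1, n' > 0, and p' with p·n⁺/(p·n⁺ + q·n⁻) < p' ≤ 1, filtering
followed by adding strictly improves the expected prediction twice. -/
theorem stmt_8 (np nm μp μm p q n' p' : ℝ)
    (hnp : 0 < np) (hnm : 0 < nm) (hμ : μp > μm)
    (hq0 : 0 < q) (hqp : q < p) (hp1 : p ≤ 1) (hn' : 0 < n')
    (hp'l : p * np / (p * np + q * nm) < p') (hp'1 : p' ≤ 1) :
    (np * μp + nm * μm) / (np + nm) <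
        (p * np * μp + q * nm * μm) / (p * np + q * nm) ∧
      (p * np * μp + q * nm * μm) / (p * np + q * nm) <
        ((p * np + p' * n') * μp + (q * nm + (1 - p') * n') * μm) /
          (p * np + q * nm + n') := by
  have hp0 : 0 < p := hq0.trans hqp
  have hA : 0 < p * np + q * nm := by positivity
  have h1 : 0 < np + nm := by positivity
  have hB : 0 < p * np + q * nm + n' := by positivity
  have hp' : p * np < p' * (p * np + q * nm) := by
    rwa [div_lt_iff₀ hA] at hp'l
  constructor
  · rw [div_lt_div_iff₀ h1 hA]
    nlinarith [mul_pos hnp hnm, sub_pos.mpr hμ, sub_pos.mpr hqp,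
      mul_pos (mul_pos hnp hnm) (mul_pos (sub_pos.mpr hμ) (sub_pos.mpr hqp))]
  · rw [div_lt_div_iff₀ hA hB]
    nlinarith [mul_pos hn' (mul_pos (sub_pos.mpr hp') (sub_pos.mpr hμ))]
end
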